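/- Let X be a real vector space, let K be a cone in X, and let N be a quasi-norm with modulus of concavity C ≥ 1 on the subspace δK = K − K, such that the quasi-normed space (δK, N) is complete (every sequence (y_k) in δK with N(y_k − y_l) → 0 as k, l → ∞ admits y ∈ δK with N(y_k − y) → 0) and K is closed in δK (if x_j ∈ K, y ∈ δK and N(x_j − y) → 0, then y ∈ K). Let Ψ : X → [0, ∞] be a function satisfying: (a) Ψ(t • x) = t · Ψ(x) for every real t ≥ 0 and every x ∈ K; (b') Ψ is sequentially upper semicontinuous on K with respect to N, i.e. if x_j ∈ K, x ∈ K and N(x_j − x) → 0, then limsup_j Ψ(x_j) ≤ Ψ(x). Then the following are equivalent: (1) there exists a constant B > 0 such that Ψ(x) ≤ B · N(x) for all x ∈ K; (2) Ψ(x) < ∞ for all x ∈ K. -/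

import Mathlib

/-!
Sequential upper semicontinuity at `0`, where `Ψ 0 = 0`, yields `δ > 0` with `Ψ < 1` on the
`N`-ball of radius `δ` in `K`. Rescaling any `x ∈ K` into that ball and using the homogeneity
of `N` and `Ψ` gives `Ψ x ≤ (2 / δ) * N x`; conversely such a bound makes `Ψ` finite.
-/

open Pointwise Filter Topology
open scoped ENNReal

section

variable {X : Type*} [AddCommGroup X] {K : Set X} {N : X → ℝ} {Ψ : X → ℝ≥0∞}

theorem exists_pos_forall_lt_of_limsup_le {x₀ : X} (hx₀ : x₀ ∈ K)
    (hNnonneg : ∀ x ∈ K - K, 0 ≤ N x)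
    (hΨusc : ∀ x : ℕ → X, (∀ j, x j ∈ K) →
      Tendsto (fun j => N (x j - x₀)) atTop (𝓝 0) → limsup (fun j => Ψ (x j)) atTop ≤ Ψ x₀)
    {c : ℝ≥0∞} (hc : Ψ x₀ < c) :
    ∃ δ > 0, ∀ y ∈ K, N (y - x₀) < δ → Ψ y < c := by
  by_contra! hbad
  choose y hyK hyN hyΨ using fun j : ℕ => hbad (1 / ((j : ℝ) + 1)) Nat.one_div_pos_of_nat
  have hy_tendsto : Tendsto (fun j => N (y j - x₀)) atTop (𝓝 0) :=
    tendsto_of_tendsto_of_tendsto_of_le_of_le tendsto_const_nhds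
      tendsto_one_div_add_atTop_nhds_zero_nat
      (fun j => hNnonneg _ (Set.sub_mem_sub (hyK j) hx₀)) (fun j => (hyN j).le)
  have hc_le : c ≤ limsup (fun j => Ψ (y j)) atTop :=
    le_limsup_of_frequently_le (Frequently.of_forall hyΨ)
  exact (hc_le.trans (hΨusc y hyK hy_tendsto)).not_gt hc

theorem le_ofReal_two_div_mul_of_forall_lt_one [Module ℝ X]
    (hKsmul : ∀ t : ℝ, 0 ≤ t → ∀ x ∈ K, t • x ∈ K)
    (hNnonneg : ∀ x ∈ K, 0 ≤ N x) (hNdef : ∀ x ∈ K, N x = 0 → x = 0)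
    (hNhom : ∀ t : ℝ, 0 ≤ t → ∀ x ∈ K, N (t • x) = t * N x)
    (hΨhom : ∀ t : ℝ, 0 ≤ t → ∀ x ∈ K, Ψ (t • x) = ENNReal.ofReal t * Ψ x)
    {δ : ℝ} (hδ : 0 < δ) (hsmall : ∀ y ∈ K, N y < δ → Ψ y < 1) {x : X} (hx : x ∈ K) :
    Ψ x ≤ ENNReal.ofReal (2 / δ * N x) := by
  rcases (hNnonneg x hx).eq_or_lt with hN0 | hNpos
  · obtain rfl := hNdef x hx hN0.symm
    have hΨ0 : Ψ 0 = 0 := by simpa using hΨhom 0 le_rfl 0 hx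
    simp [hΨ0]
  set t := δ / (2 * N x) with ht_def
  have ht : 0 < t := by positivity
  have hyK : t • x ∈ K := hKsmul t ht.le x hx
  have hNy : N (t • x) < δ := by
    have htN : t * N x = δ / 2 := by
      rw [ht_def]
      field_simp
    rw [hNhom t ht.le x hx, htN]
    linarith
  have hx_eq : x = t⁻¹ • t • x := (inv_smul_smul₀ ht.ne' x).symm
  calc Ψ x = ENNReal.ofReal t⁻¹ * Ψ (t • x) := by
        conv_lhs => rw [hx_eq]
        exact hΨhom t⁻¹ (inv_nonneg.mpr ht.le) _ hyK
    _ ≤ ENNReal.ofReal t⁻¹ * 1 := by gcongr; exact (hsmall _ hyK hNy).le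
    _ = ENNReal.ofReal (2 / δ * N x) := by
        rw [mul_one, ht_def, inv_div, mul_div_right_comm]

end

theorem quasiBanach_bounded_iff_finite_of_usc_general
    {X : Type*} [AddCommGroup X] [Module ℝ X]
    (K : Set X) (hKne : K.Nonempty)
    (hKsmul : ∀ t : ℝ, 0 ≤ t → ∀ x ∈ K, t • x ∈ K)
    (N : X → ℝ)
    (hNnonneg : ∀ x ∈ K - K, 0 ≤ N x)
    (hNdef : ∀ x ∈ K - K, (N x = 0 ↔ x = 0))
    (hNhom : ∀ t : ℝ, 0 ≤ t → ∀ x ∈ K - K, N (t • x) = t * N x)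
    (Ψ : X → ℝ≥0∞)
    (hΨhom : ∀ t : ℝ, 0 ≤ t → ∀ x ∈ K, Ψ (t • x) = ENNReal.ofReal t * Ψ x)
    (hΨusc : ∀ x : ℕ → X, (∀ j, x j ∈ K) → ∀ x₀ ∈ K,
      Tendsto (fun j => N (x j - x₀)) atTop (𝓝 0) →
      Filter.limsup (fun j => Ψ (x j)) atTop ≤ Ψ x₀) :
    (∃ B : ℝ, 0 < B ∧ ∀ x ∈ K, Ψ x ≤ ENNReal.ofReal (B * N x)) ↔
      (∀ x ∈ K, Ψ x < ⊤) := by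
  refine ⟨fun ⟨B, _, hB⟩ x hx => (hB x hx).trans_lt ENNReal.ofReal_lt_top, fun _ => ?_⟩
  obtain ⟨x₁, hx₁⟩ := hKne
  have h0K : (0 : X) ∈ K := by simpa using hKsmul 0 le_rfl x₁ hx₁
  have hKsub : K ⊆ K - K := Set.subset_sub_left h0K
  have hΨ0 : Ψ 0 = 0 := by simpa using hΨhom 0 le_rfl 0 h0K
  obtain ⟨δ, hδ, hsmall⟩ := exists_pos_forall_lt_of_limsup_le h0K hNnonneg
    (fun x hxK => hΨusc x hxK 0 h0K) (c := 1) (by simp [hΨ0])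
  refine ⟨2 / δ, by positivity, fun x hx => ?_⟩
  exact le_ofReal_two_div_mul_of_forall_lt_one hKsmul (fun x hx => hNnonneg x (hKsub hx))
    (fun x hx => (hNdef x (hKsub hx)).mp) (fun t ht x hx => hNhom t ht x (hKsub hx)) hΨhom hδ
    (fun y hy hNy => hsmall y hy (by simpa using hNy)) hx

/-- **Quasi-Banach boundedness criterion** (upper semicontinuous version).
`K` is a cone in the real vector space `X`, `N` is a quasi-norm with modulus of
concavity `C ≥ 1` on `δK = K - K`, `(δK, N)` is complete, `K` is closed in `δK`,
and `Ψ : X → [0, ∞]` is homogeneous and sequentially upper semicontinuous on `K`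
with respect to `N`.  Then `Ψ` is bounded by a multiple of `N` on `K` iff `Ψ` is
finite on `K`. -/
theorem quasiBanach_bounded_iff_finite_of_usc
    {X : Type*} [AddCommGroup X] [Module ℝ X]
    (K : Set X) (hKne : K.Nonempty)
    (hKadd : ∀ x ∈ K, ∀ y ∈ K, x + y ∈ K)
    (hKsmul : ∀ t : ℝ, 0 ≤ t → ∀ x ∈ K, t • x ∈ K)
    (hKpointed : ∀ x ∈ K, -x ∈ K → x = 0)
    (N : X → ℝ) (C : ℝ) (hC : 1 ≤ C)
    (hNnonneg : ∀ x ∈ K - K, 0 ≤ N x)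
    (hNdef : ∀ x ∈ K - K, (N x = 0 ↔ x = 0))
    (hNhom : ∀ t : ℝ, 0 ≤ t → ∀ x ∈ K - K, N (t • x) = t * N x)
    (hNtri : ∀ x ∈ K - K, ∀ y ∈ K - K, N (x + y) ≤ C * (N x + N y))
    (hComplete : ∀ y : ℕ → X, (∀ k, y k ∈ K - K) →
      (∀ ε : ℝ, 0 < ε → ∃ M : ℕ, ∀ k ≥ M, ∀ l ≥ M, N (y k - y l) < ε) →
      ∃ z ∈ K - K, Tendsto (fun k => N (y k - z)) atTop (𝓝 0))
    (hClosed : ∀ x : ℕ → X, (∀ j, x j ∈ K) → ∀ y ∈ K - K,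
      Tendsto (fun j => N (x j - y)) atTop (𝓝 0) → y ∈ K)
    (Ψ : X → ℝ≥0∞)
    (hΨhom : ∀ t : ℝ, 0 ≤ t → ∀ x ∈ K, Ψ (t • x) = ENNReal.ofReal t * Ψ x)
    (hΨusc : ∀ x : ℕ → X, (∀ j, x j ∈ K) → ∀ x₀ ∈ K,
      Tendsto (fun j => N (x j - x₀)) atTop (𝓝 0) →
      Filter.limsup (fun j => Ψ (x j)) atTop ≤ Ψ x₀) :
    (∃ B : ℝ, 0 < B ∧ ∀ x ∈ K, Ψ x ≤ ENNReal.ofReal (B * N x)) ↔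
      (∀ x ∈ K, Ψ x < ⊤) :=
  quasiBanach_bounded_iff_finite_of_usc_general K hKne hKsmul N hNnonneg hNdef hNhom Ψ hΨhom hΨusc
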